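/- arXiv:1505.07449 — 4 statements merged into one kernel-verified Lean document; each statement's English description precedes it below -/
import Mathlib

section
/- Fix real numbers b, c, d with d - c < 0 and c - b < 0, and real constants h > 0, Δt > 0, F with a = 1 and F ≥ 0. Define G(b,c,d) = c - Δt·F·sqrt(1 + ((d-c)/h)^2). If |F|·Δt ≤ h·P/sqrt(1+P^2) and |(d-c)/h| ≤ P for some P > 0, then ∂G/∂c ≥ 0, i.e., G is nondecreasing in c. -/
/-- monotonicity in c of one case of the upwind scheme update
G(b,c,d) = c - Δt·F·√(1 + ((d-c)/h)²) when d - c < 0, c - b < 0, under the CFL-type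
condition |F|·Δt ≤ h·P/√(1+P²) and |(d-c)/h| ≤ P. -/
theorem scheme_monotone_case1 (b c d h Δt F P : ℝ)
    (hdc : d - c < 0) (hcb : c - b < 0)
    (hh : 0 < h) (hΔt : 0 < Δt) (hF : 0 ≤ F) (hP : 0 < P)
    (hCFL : |F| * Δt ≤ h * P / Real.sqrt (1 + P ^ 2))
    (hgrad : |(d - c) / h| ≤ P) :
    0 ≤ deriv (fun c' => c' - Δt * F * Real.sqrt (1 + ((d - c') / h) ^ 2)) c := by
  set x : ℝ := (d - c) / h with hxdef
  have hupos : (0:ℝ) < 1 + x ^ 2 := by positivity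
  have hx : HasDerivAt (fun c' => (d - c') / h) (-1 / h) c := by
    simpa using ((hasDerivAt_id c).const_sub d).div_const h
  have hu : HasDerivAt (fun c' => 1 + ((d - c') / h) ^ 2)
      (2 * x ^ 1 * (-1 / h)) c := (hx.pow 2).const_add 1
  have hs : HasDerivAt (fun c' => Real.sqrt (1 + ((d - c') / h) ^ 2))
      ((2 * x ^ 1 * (-1 / h)) / (2 * Real.sqrt (1 + x ^ 2))) c :=
    hu.sqrt (ne_of_gt hupos)
  have hfull : HasDerivAt (fun c' => c' - Δt * F * Real.sqrt (1 + ((d - c') / h) ^ 2))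
      (1 - Δt * F * ((2 * x ^ 1 * (-1 / h)) / (2 * Real.sqrt (1 + x ^ 2)))) c :=
    (hasDerivAt_id c).sub (hs.const_mul (Δt * F))
  rw [hfull.deriv]
  set s : ℝ := Real.sqrt (1 + x ^ 2) with hsdef
  have hsq : (0:ℝ) < s := Real.sqrt_pos.mpr hupos
  have hsqP : (0:ℝ) < Real.sqrt (1 + P ^ 2) := Real.sqrt_pos.mpr (by positivity)
  have hxneg : 0 < -x := by
    have : x < 0 := div_neg_of_neg_of_pos hdc hh
    linarith
  have hxP : -x ≤ P := by
    have := abs_le.mp hgrad; linarith [this.1]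
  have key : (-x) / s ≤ P / Real.sqrt (1 + P ^ 2) := by
    rw [div_le_div_iff₀ hsq hsqP]
    have hLnn : 0 ≤ (-x) * Real.sqrt (1 + P ^ 2) := by positivity
    have hRnn : 0 ≤ P * s := by positivity
    have hsq2 : ((-x) * Real.sqrt (1 + P ^ 2)) ^ 2 ≤ (P * s) ^ 2 := by
      rw [mul_pow, mul_pow, hsdef, Real.sq_sqrt (by positivity : (0:ℝ) ≤ 1 + P ^ 2),
        Real.sq_sqrt (le_of_lt hupos)]
      nlinarith
    calc (-x) * Real.sqrt (1 + P ^ 2)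
        = Real.sqrt (((-x) * Real.sqrt (1 + P ^ 2)) ^ 2) := (Real.sqrt_sq hLnn).symm
      _ ≤ Real.sqrt ((P * s) ^ 2) := Real.sqrt_le_sqrt hsq2
      _ = P * s := Real.sqrt_sq hRnn
  have hCFL' : F * Δt ≤ h * (P / Real.sqrt (1 + P ^ 2)) := by
    rw [abs_of_nonneg hF] at hCFL; linarith [hCFL, (mul_div_assoc h P (Real.sqrt (1 + P ^ 2)))]
  have hq1 : P / Real.sqrt (1 + P ^ 2) ≤ 1 := by
    rw [div_le_one hsqP]
    exact (Real.le_sqrt hP.le (by positivity)).mpr (by nlinarith)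
  have hq0 : 0 ≤ P / Real.sqrt (1 + P ^ 2) := by positivity
  have main : Δt * F * ((-x) / s) ≤ h := by
    have h1 : Δt * F * ((-x) / s) ≤ Δt * F * (P / Real.sqrt (1 + P ^ 2)) :=
      mul_le_mul_of_nonneg_left key (by positivity)
    have h2 : Δt * F * (P / Real.sqrt (1 + P ^ 2)) ≤
        h * (P / Real.sqrt (1 + P ^ 2)) * (P / Real.sqrt (1 + P ^ 2)) := by
      nlinarith [mul_le_mul_of_nonneg_right hCFL' hq0]
    have h3 : h * (P / Real.sqrt (1 + P ^ 2)) * (P / Real.sqrt (1 + P ^ 2)) ≤ h := by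
      have hqq : (P / Real.sqrt (1 + P ^ 2)) * (P / Real.sqrt (1 + P ^ 2)) ≤ 1 := by
        nlinarith [mul_le_mul hq1 hq1 hq0 zero_le_one]
      calc h * (P / Real.sqrt (1 + P ^ 2)) * (P / Real.sqrt (1 + P ^ 2))
          = h * ((P / Real.sqrt (1 + P ^ 2)) * (P / Real.sqrt (1 + P ^ 2))) := by ring
        _ ≤ h * 1 := mul_le_mul_of_nonneg_left hqq hh.le
        _ = h := mul_one h
    linarith
  have heq : Δt * F * ((2 * x ^ 1 * (-1 / h)) / (2 * s)) = (Δt * F * ((-x) / s)) / h := by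
    field_simp
  rw [heq, sub_nonneg, div_le_one hh]
  exact main
end

section
/- Fix h > 0, Δt > 0, M ≥ 0, P > 0 with M·Δt ≤ h/(2P). Let G(b,c,d) = c - Δt·F·sqrt(1 + max(0, -(d-c)/h)^2 + max(0, (c-b)/h)^2) with 0 ≤ F ≤ M, restricted to (b,c,d) with |(d-c)/h| ≤ P and |(c-b)/h| ≤ P. Then G is nondecreasing in each of b, c, and d separately. -/
/-!
The update is `c` minus the nonnegative multiple `Δt·F` of the Hamiltonian
`H(D⁺, D⁻) = √(1 + max(0, -D⁺)² + max(0, D⁻)²)`, which is nonincreasing in `D⁺` and nondecreasing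
in `D⁻`; monotonicity in `b` and `d` is then immediate. Raising `c` by `δ` moves both quotients by
`t = δ/h` in the unfavourable direction. While the quotients stay in `[-P, P]`, each squared term
grows by at most `2Pt`, and since `√` is `1/2`-Lipschitz on `[1, ∞)` the Hamiltonian grows by at
most `2Pt`. The CFL condition gives `Δt·F·2P ≤ h`, so this loss is paid for by the gain `δ = ht`
in the first term.
-/

open Real

theorem sqrt_add_le_sqrt_add_half {s a : ℝ} (hs : 1 ≤ s) (ha : 0 ≤ a) :
    √(s + a) ≤ √s + a / 2 := by
  have h_one : 1 ≤ √s := one_le_sqrt.mpr hs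
  rw [sqrt_le_iff]
  refine ⟨by positivity, ?_⟩
  nlinarith [sq_sqrt (by linarith : 0 ≤ s)]

theorem sq_max_zero_add_le {x t P : ℝ} (ht : 0 ≤ t) (hP : 0 ≤ P) (hxt : x + t ≤ P) :
    max 0 (x + t) ^ 2 ≤ max 0 x ^ 2 + 2 * P * t := by
  have h_mono : max 0 x ≤ max 0 (x + t) := max_le_max le_rfl (by linarith)
  have h_lip : max 0 (x + t) ≤ max 0 x + t :=
    max_le (by positivity) (by linarith [le_max_right 0 x])
  have h_bound : max 0 (x + t) ≤ P := max_le hP hxt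
  nlinarith [le_max_left 0 x]

/-- `p` plays the role of `D⁺ = (d - c)/h` and `q` of `D⁻ = (c - b)/h`. -/
noncomputable def upwindHamiltonian (p q : ℝ) : ℝ :=
  √(1 + max 0 (-p) ^ 2 + max 0 q ^ 2)

theorem upwindHamiltonian_antitone_left (q : ℝ) : Antitone (upwindHamiltonian · q) := by
  intro p p' hp
  have h_sq : max 0 (-p') ^ 2 ≤ max 0 (-p) ^ 2 := by gcongr
  unfold upwindHamiltonian
  exact sqrt_le_sqrt (by linarith)

theorem upwindHamiltonian_monotone_right (p : ℝ) : Monotone (upwindHamiltonian p) := by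
  intro q q' hq
  unfold upwindHamiltonian
  gcongr

theorem upwindHamiltonian_sub_add_le {p q t P : ℝ} (ht : 0 ≤ t) (hP : 0 ≤ P)
    (hp : -(p - t) ≤ P) (hq : q + t ≤ P) :
    upwindHamiltonian (p - t) (q + t) ≤ upwindHamiltonian p q + 2 * P * t := by
  have h_left : max 0 (-(p - t)) ^ 2 ≤ max 0 (-p) ^ 2 + 2 * P * t := by
    rw [show -(p - t) = -p + t by ring] at hp ⊢
    exact sq_max_zero_add_le ht hP hp
  have h_right := sq_max_zero_add_le ht hP hq
  calc upwindHamiltonian (p - t) (q + t)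
      ≤ √((1 + max 0 (-p) ^ 2 + max 0 q ^ 2) + 4 * P * t) := by
        unfold upwindHamiltonian
        exact sqrt_le_sqrt (by linarith)
    _ ≤ upwindHamiltonian p q + 4 * P * t / 2 :=
        sqrt_add_le_sqrt_add_half (by nlinarith) (by positivity)
    _ = upwindHamiltonian p q + 2 * P * t := by ring

/-- The update `G(b, c, d)`, which depends on `Δt` and `F` only through `k = Δt·F`. -/
noncomputable def upwindScheme (k h b c d : ℝ) : ℝ :=
  c - k * upwindHamiltonian ((d - c) / h) ((c - b) / h)

section upwindScheme

variable {k h b b' c c' d d' : ℝ}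

theorem upwindScheme_mono_left (hk : 0 ≤ k) (hh : 0 ≤ h) (hb : b ≤ b') :
    upwindScheme k h b c d ≤ upwindScheme k h b' c d := by
  have hq : (c - b') / h ≤ (c - b) / h := div_le_div_of_nonneg_right (by linarith) hh
  exact sub_le_sub_left (mul_le_mul_of_nonneg_left
    (upwindHamiltonian_monotone_right _ hq) hk) c

theorem upwindScheme_mono_right (hk : 0 ≤ k) (hh : 0 ≤ h) (hd : d ≤ d') :
    upwindScheme k h b c d ≤ upwindScheme k h b c d' := by
  have hp : (d - c) / h ≤ (d' - c) / h := div_le_div_of_nonneg_right (by linarith) hh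
  exact sub_le_sub_left (mul_le_mul_of_nonneg_left
    (upwindHamiltonian_antitone_left _ hp) hk) c

theorem upwindScheme_mono_mid {P : ℝ} (hk : 0 ≤ k) (hh : 0 < h) (hP : 0 ≤ P)
    (hCFL : k * (2 * P) ≤ h) (hc : c ≤ c') (hd : -((d - c') / h) ≤ P)
    (hb : (c' - b) / h ≤ P) :
    upwindScheme k h b c d ≤ upwindScheme k h b c' d := by
  set t := (c' - c) / h
  have ht : 0 ≤ t := div_nonneg (by linarith) hh.le
  have hd_shift : (d - c') / h = (d - c) / h - t := by simp only [t]; ring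
  have hb_shift : (c' - b) / h = (c - b) / h + t := by simp only [t]; ring
  rw [hd_shift] at hd
  rw [hb_shift] at hb
  have h_growth := mul_le_mul_of_nonneg_left (upwindHamiltonian_sub_add_le ht hP hd hb) hk
  have h_gain : k * (2 * P) * t ≤ c' - c := by
    calc k * (2 * P) * t ≤ h * t := mul_le_mul_of_nonneg_right hCFL ht
      _ = c' - c := mul_div_cancel₀ _ hh.ne'
  unfold upwindScheme
  rw [hd_shift, hb_shift]
  linarith

end upwindScheme

theorem scheme_monotone_full_general (h Δt M P F : ℝ)
    (hh : 0 < h) (hΔt : 0 < Δt) (hP : 0 < P)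
    (hCFL : M * Δt ≤ h / (2 * P)) (hF0 : 0 ≤ F) (hFM : F ≤ M)
    (G : ℝ → ℝ → ℝ → ℝ)
    (hG : ∀ b c d, G b c d =
      c - Δt * F * Real.sqrt (1 + (max 0 (-((d - c) / h))) ^ 2
        + (max 0 ((c - b) / h)) ^ 2)) :
    (∀ b b' c d, b ≤ b' → |(d - c) / h| ≤ P → |(c - b) / h| ≤ P →
      |(c - b') / h| ≤ P → G b c d ≤ G b' c d) ∧
    (∀ b c c' d, c ≤ c' → |(d - c) / h| ≤ P → |(c - b) / h| ≤ P →
      |(d - c') / h| ≤ P → |(c' - b) / h| ≤ P → G b c d ≤ G b c' d) ∧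
    (∀ b c d d', d ≤ d' → |(d - c) / h| ≤ P → |(d' - c) / h| ≤ P →
      |(c - b) / h| ≤ P → G b c d ≤ G b c d') := by
  obtain rfl : G = upwindScheme (Δt * F) h := funext₃ hG
  have hk : 0 ≤ Δt * F := by positivity
  have hkP : Δt * F * (2 * P) ≤ h := by
    rw [← le_div_iff₀ (by positivity)]
    calc Δt * F ≤ M * Δt := by nlinarith
      _ ≤ h / (2 * P) := hCFL
  refine ⟨fun b b' c d hb _ _ _ => upwindScheme_mono_left hk hh.le hb,
    fun b c c' d hc _ _ hd hb => ?_, fun b c d d' hd _ _ _ => upwindScheme_mono_right hk hh.le hd⟩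
  exact upwindScheme_mono_mid hk hh hP.le hkP hc (by linarith [(abs_le.mp hd).1]) (abs_le.mp hb).2

/-- the full upwind numerical update
G(b,c,d) = c - Δt·F·√(1 + max(0,-(d-c)/h)² + max(0,(c-b)/h)²) is nondecreasing in
each of b, c, d separately, under the CFL condition M·Δt ≤ h/(2P) with 0 ≤ F ≤ M,
restricted to arguments whose difference quotients are bounded by P. -/
theorem scheme_monotone_full (h Δt M P F : ℝ)
    (hh : 0 < h) (hΔt : 0 < Δt) (hM : 0 ≤ M) (hP : 0 < P)
    (hCFL : M * Δt ≤ h / (2 * P)) (hF0 : 0 ≤ F) (hFM : F ≤ M)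
    (G : ℝ → ℝ → ℝ → ℝ)
    (hG : ∀ b c d, G b c d =
      c - Δt * F * Real.sqrt (1 + (max 0 (-((d - c) / h))) ^ 2
        + (max 0 ((c - b) / h)) ^ 2)) :
    (∀ b b' c d, b ≤ b' → |(d - c) / h| ≤ P → |(c - b) / h| ≤ P →
      |(c - b') / h| ≤ P → G b c d ≤ G b' c d) ∧
    (∀ b c c' d, c ≤ c' → |(d - c) / h| ≤ P → |(c - b) / h| ≤ P →
      |(d - c') / h| ≤ P → |(c' - b) / h| ≤ P → G b c d ≤ G b c' d) ∧
    (∀ b c d d', d ≤ d' → |(d - c) / h| ≤ P → |(d' - c) / h| ≤ P →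
      |(c - b) / h| ≤ P → G b c d ≤ G b c d') :=
  scheme_monotone_full_general h Δt M P F hh hΔt hP hCFL hF0 hFM G hG
end

section
/- Let r_0 > 0, x_c(t) = r_0 sinh(t), r(t) = r_0 cosh(t). Then the circle C_t = {(x,y) : (x - x_c(t))^2 + y^2 = r(t)^2} is the evolution of the circle of radius r_0 centered at the origin under normal speed F(x,y) = x: for each point (x,y) ∈ C_t, the normal velocity of C_t at (x,y) equals x. Concretely, the curve γ(θ,t) = (x_c(t) + r(t)cos θ, r(t) sin θ) satisfies ∂_t γ · n = F(γ), where n = (cos θ, sin θ) is the outward unit normal. -/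
/-! For a circle with centre `(x_c, 0)` and radius `r`, the normal velocity of the point at
angle `θ` is `x_c' cos θ + r'`, since the `sin² θ + cos² θ` terms collapse. For
`x_c = r₀ sinh`, `r = r₀ cosh` the derivatives swap the two functions, `x_c' = r` and
`r' = x_c`, so the normal velocity is `r cos θ + x_c`, the `x`-coordinate of the point. -/

open Real

theorem circle_normal_velocity_eq {xc r : ℝ → ℝ} {xc' r' t : ℝ}
    (hxc : HasDerivAt xc xc' t) (hr : HasDerivAt r r' t) (θ : ℝ) :
    deriv (fun s => xc s + r s * cos θ) t * cos θ + deriv (fun s => r s * sin θ) t * sin θ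
      = xc' * cos θ + r' := by
  have hx : HasDerivAt (fun s => xc s + r s * cos θ) (xc' + r' * cos θ) t :=
    hxc.add (hr.mul_const (cos θ))
  rw [hx.deriv, (hr.mul_const (sin θ)).deriv]
  linear_combination r' * sin_sq_add_cos_sq θ

theorem circle_normal_speed_x_general (r0 : ℝ)
    (xc r : ℝ → ℝ)
    (hxc : ∀ t, xc t = r0 * Real.sinh t) (hr : ∀ t, r t = r0 * Real.cosh t)
    (θ t : ℝ) :
    deriv (fun s => xc s + r s * Real.cos θ) t * Real.cos θ
      + deriv (fun s => r s * Real.sin θ) t * Real.sin θ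
      = xc t + r t * Real.cos θ := by
  obtain rfl : xc = fun s => r0 * sinh s := funext hxc
  obtain rfl : r = fun s => r0 * cosh s := funext hr
  rw [circle_normal_velocity_eq ((hasDerivAt_sinh t).const_mul r0)
    ((hasDerivAt_cosh t).const_mul r0) θ]
  ring

/-- the circle of radius r(t) = r₀cosh t centered at (x_c(t),0) with
x_c(t) = r₀sinh t evolves with normal speed F(x,y) = x: the parametrization
γ(θ,t) = (x_c(t) + r(t)cos θ, r(t)sin θ) satisfies ∂ₜγ·n = F(γ) with
n = (cos θ, sin θ). -/
theorem circle_normal_speed_x (r0 : ℝ) (hr0 : 0 < r0)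
    (xc r : ℝ → ℝ)
    (hxc : ∀ t, xc t = r0 * Real.sinh t) (hr : ∀ t, r t = r0 * Real.cosh t)
    (θ t : ℝ) :
    deriv (fun s => xc s + r s * Real.cos θ) t * Real.cos θ
      + deriv (fun s => r s * Real.sin θ) t * Real.sin θ
      = xc t + r t * Real.cos θ :=
  circle_normal_speed_x_general r0 xc r hxc hr θ t
end

section
/- Let ψ_v, ψ_u ∈ R ∪ {+∞} (not both +∞) with finite values nonnegative, and τ_v, τ_u > 0. Define ψ_min as the minimum over ξ ∈ [0,1] of f(ξ) = ξψ_v + (1-ξ)ψ_u + sqrt(ξ^2 + (1-ξ)^2)(ξτ_v + (1-ξ)τ_u) (interpreting terms with +∞ appropriately, so that ξ = 0 or 1 is forced if one value is infinite). Then ψ_min ≥ min(ψ_v, ψ_u) + (1/√2)·min(τ_v, τ_u) > min(ψ_v, ψ_u), i.e., the t-FMM update strictly increases values, which guarantees causality of the marching order. -/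
/-!
Each value `f ξ` splits into a convex combination of `ψ_v, ψ_u`, which is at least their
minimum, plus the travel-time term `√(ξ² + (1-ξ)²) · (ξ τ_v + (1-ξ) τ_u)`. The first factor of
the latter is the length of a point of the segment from `(1,0)` to `(0,1)`, hence at least the
distance `1/√2` of that segment from the origin, and the second factor is again a convex
combination. Since `min ψ_v ψ_u` is finite, adding the positive bound makes it strictly larger.
-/

theorem EReal.min_le_combo (x y : EReal) {a b : ℝ} (ha : 0 ≤ a) (hb : 0 ≤ b) (hab : a + b = 1) :
    min x y ≤ (a : EReal) * x + (b : EReal) * y := by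
  have ha' : (0 : EReal) ≤ a := EReal.coe_nonneg.2 ha
  have hb' : (0 : EReal) ≤ b := EReal.coe_nonneg.2 hb
  calc min x y = ((a + b : ℝ) : EReal) * min x y := by rw [hab, EReal.coe_one, one_mul]
    _ = (a : EReal) * min x y + (b : EReal) * min x y := by
      rw [EReal.coe_add, EReal.right_distrib_of_nonneg ha' hb']
    _ ≤ (a : EReal) * x + (b : EReal) * y := by
      gcongr
      exacts [min_le_left x y, min_le_right x y]

theorem inv_sqrt_two_le_sqrt_sq_add_sq {a b : ℝ} (hab : a + b = 1) :
    1 / √2 ≤ √(a ^ 2 + b ^ 2) := by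
  rw [one_div, ← Real.sqrt_inv]
  exact Real.sqrt_le_sqrt (by nlinarith [sq_nonneg (a - b)])

theorem inv_sqrt_two_mul_min_le {a b s t : ℝ} (ha : 0 ≤ a) (hb : 0 ≤ b) (hab : a + b = 1)
    (hs : 0 ≤ s) (ht : 0 ≤ t) :
    1 / √2 * min s t ≤ √(a ^ 2 + b ^ 2) * (a * s + b * t) := by
  have hcombo : min s t ≤ a * s + b * t := Convex.min_le_combo s t ha hb hab
  exact mul_le_mul (inv_sqrt_two_le_sqrt_sq_add_sq hab) hcombo (le_min hs ht) (Real.sqrt_nonneg _)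

theorem EReal.lt_add_coe_of_pos {x : EReal} (hx_top : x ≠ ⊤) (hx_bot : x ≠ ⊥) {c : ℝ}
    (hc : 0 < c) : x < x + c := by
  lift x to ℝ using ⟨hx_top, hx_bot⟩
  exact_mod_cast lt_add_of_pos_right x hc

theorem tfmm_causality_general (ψv ψu : EReal)
    (hvbot : ψv ≠ ⊥) (hubot : ψu ≠ ⊥)
    (hnot : ¬(ψv = ⊤ ∧ ψu = ⊤))
    (τv τu : ℝ) (hτv : 0 < τv) (hτu : 0 < τu)
    (f : ℝ → EReal)
    (hf : ∀ ξ : ℝ, f ξ = (ξ : EReal) * ψv + ((1 - ξ : ℝ) : EReal) * ψu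
      + ((Real.sqrt (ξ ^ 2 + (1 - ξ) ^ 2) * (ξ * τv + (1 - ξ) * τu) : ℝ) : EReal)) :
    (min ψv ψu + (((1 / Real.sqrt 2) * min τv τu : ℝ) : EReal)
        ≤ ⨅ ξ : Set.Icc (0 : ℝ) 1, f ξ.1) ∧
    (min ψv ψu < ⨅ ξ : Set.Icc (0 : ℝ) 1, f ξ.1) := by
  have hbound : min ψv ψu + (((1 / Real.sqrt 2) * min τv τu : ℝ) : EReal)
      ≤ ⨅ ξ : Set.Icc (0 : ℝ) 1, f ξ.1 := by
    refine le_iInf fun ⟨ξ, hξ0, hξ1⟩ => ?_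
    have hsum : ξ + (1 - ξ) = 1 := add_sub_cancel ξ 1
    rw [show f _ = f ξ from rfl, hf]
    exact add_le_add (EReal.min_le_combo ψv ψu hξ0 (sub_nonneg.2 hξ1) hsum)
      (EReal.coe_le_coe_iff.2 (inv_sqrt_two_mul_min_le hξ0 (sub_nonneg.2 hξ1) hsum hτv.le hτu.le))
  refine ⟨hbound, lt_of_lt_of_le ?_ hbound⟩
  exact EReal.lt_add_coe_of_pos (mt min_eq_top.1 hnot) (by simp [min_eq_bot, hvbot, hubot])
    (mul_pos (by positivity) (lt_min hτv hτu))

/-- the t-FMM quadrant update strictly increases values. With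
ψ_v, ψ_u ∈ ℝ ∪ {+∞} (not both +∞), finite values nonnegative, and τ_v, τ_u > 0,
the minimum over ξ ∈ [0,1] of f(ξ) = ξψ_v + (1-ξ)ψ_u + √(ξ²+(1-ξ)²)(ξτ_v+(1-ξ)τ_u)
is at least min(ψ_v,ψ_u) + (1/√2)·min(τ_v,τ_u) > min(ψ_v,ψ_u). -/
theorem tfmm_causality (ψv ψu : EReal)
    (hvbot : ψv ≠ ⊥) (hubot : ψu ≠ ⊥)
    (hnot : ¬(ψv = ⊤ ∧ ψu = ⊤))
    (hv0 : 0 ≤ ψv) (hu0 : 0 ≤ ψu)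
    (τv τu : ℝ) (hτv : 0 < τv) (hτu : 0 < τu)
    (f : ℝ → EReal)
    (hf : ∀ ξ : ℝ, f ξ = (ξ : EReal) * ψv + ((1 - ξ : ℝ) : EReal) * ψu
      + ((Real.sqrt (ξ ^ 2 + (1 - ξ) ^ 2) * (ξ * τv + (1 - ξ) * τu) : ℝ) : EReal)) :
    (min ψv ψu + (((1 / Real.sqrt 2) * min τv τu : ℝ) : EReal)
        ≤ ⨅ ξ : Set.Icc (0 : ℝ) 1, f ξ.1) ∧
    (min ψv ψu < ⨅ ξ : Set.Icc (0 : ℝ) 1, f ξ.1) :=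
  tfmm_causality_general ψv ψu hvbot hubot hnot τv τu hτv hτu f hf
end
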